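/- Under Slater's condition for the risk constraint — existence of a feasible X̂† ∈ L²(σ(Y)) with E[V_Y[‖X − X̂†‖₂²]] < ε — it necessarily holds that E[V_Y[‖X‖₂²]] < ∞. -/

import Mathlib

open MeasureTheory

noncomputable section

/-- Squared Euclidean norm of a vector in `ℝ^M`. -/
def sqn {M : ℕ} (v : Fin M → ℝ) : ℝ := ∑ i, v i ^ 2

/-- Euclidean norm of a vector in `ℝ^M`. -/
def enorm2 {M : ℕ} (v : Fin M → ℝ) : ℝ := Real.sqrt (∑ i, v i ^ 2)

/-- The expected predictive variance (risk) `E[V_Y[Z]] = E[(Z − E[Z|Y])²]` of a real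
random variable `Z`, as an extended nonnegative real; `m` plays the role of `σ(Y)`. -/
def risk {Ω : Type*} {m0 : MeasurableSpace Ω} (m : MeasurableSpace Ω) (μ : @Measure Ω m0)
    (Z : Ω → ℝ) : ENNReal :=
  ∫⁻ ω, ENNReal.ofReal ((Z ω - (μ[Z|m]) ω) ^ 2) ∂μ

/-!
Write `Z = ‖X‖²`, `W = ‖X - X̂†‖²` and `T = ⟨X̂†, X⟩`, so that `Z = W + 2T - ‖X̂†‖²`. Since `X̂†` is
`σ(Y)`-measurable, the centred variables `B = Z - E[Z|Y]`, `A = W - E[W|Y]` and `T̃ = T - E[T|Y]`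
satisfy `B = A + 2T̃`, and Slater's condition says `A ∈ L²`. From `B² = A² + 4BT̃ - 4T̃² ≤ A² + 4BT̃` we get
`E[B²] ≤ E[A²] + 4E[BT̃]`, where `E[BT̃] = ∑ᵢ E[X̂†ᵢ Cov(‖X‖², Xᵢ | Y)]` and
`|Cov(‖X‖², Xᵢ | Y)| ≤ 4 + 5 E[‖X‖³|Y]`, a square-integrable bound by the moment assumption. The
covariance bound rests on the conditional Hölder-type inequality
`E[‖X‖²|Y] E[‖X‖|Y] ≤ 4 (1 + E[‖X‖³|Y])`, obtained by rescaling `X` by `(1 + E[‖X‖³|Y])^(-1/3)`.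
As `BT̃` need not be integrable a priori, the estimate is made on the `σ(Y)`-measurable sets where
`X̂†` and `E[T|Y]` are bounded, and the bound passes to the limit by monotone convergence.
-/

lemma pow_le_pow_three_add_one {a : ℝ} (ha : 0 ≤ a) {k : ℕ} (hk : k ≤ 3) : a ^ k ≤ a ^ 3 + 1 := by
  rcases le_total a 1 with h | h
  · linarith [pow_le_one₀ ha h (n := k), pow_nonneg ha 3]
  · linarith [pow_le_pow_right₀ h hk]

lemma sqn_nonneg {M : ℕ} (v : Fin M → ℝ) : 0 ≤ sqn v :=
  Finset.sum_nonneg fun i _ => sq_nonneg (v i)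

lemma enorm2_nonneg {M : ℕ} (v : Fin M → ℝ) : 0 ≤ enorm2 v :=
  Real.sqrt_nonneg _

lemma enorm2_sq {M : ℕ} (v : Fin M → ℝ) : enorm2 v ^ 2 = sqn v :=
  Real.sq_sqrt (sqn_nonneg v)

lemma abs_le_enorm2 {M : ℕ} (v : Fin M → ℝ) (i : Fin M) : |v i| ≤ enorm2 v := by
  rw [← Real.sqrt_sq_eq_abs]
  exact Real.sqrt_le_sqrt
    (Finset.single_le_sum (f := fun j => v j ^ 2) (fun j _ => sq_nonneg (v j)) (Finset.mem_univ i))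

lemma continuous_enorm2 {M : ℕ} : Continuous (enorm2 (M := M)) := by
  unfold enorm2; fun_prop

lemma continuous_sqn {M : ℕ} : Continuous (sqn (M := M)) := by
  unfold sqn; fun_prop

lemma sqn_eq_sqn_sub_add {M : ℕ} (v w : Fin M → ℝ) :
    sqn v = sqn (fun i => v i - w i) + 2 * ∑ i, w i * v i - sqn w := by
  simp only [sqn, Finset.mul_sum, ← Finset.sum_add_distrib, ← Finset.sum_sub_distrib]
  exact Finset.sum_congr rfl fun i _ => by ring

section CondExp

variable {Ω : Type*} {m m0 : MeasurableSpace Ω} {μ : Measure Ω}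

lemma abs_condExp_le_condExp {f g : Ω → ℝ} (hf : Integrable f μ) (hg : Integrable g μ)
    (hfg : ∀ᵐ ω ∂μ, |f ω| ≤ g ω) : ∀ᵐ ω ∂μ, |μ[f|m] ω| ≤ μ[g|m] ω := by
  have hup : μ[f|m] ≤ᵐ[μ] μ[g|m] :=
    condExp_mono hf hg (hfg.mono fun ω h => (le_abs_self _).trans h)
  have hlow : μ[-g|m] ≤ᵐ[μ] μ[f|m] :=
    condExp_mono hg.neg hf (hfg.mono fun ω h => show -g ω ≤ f ω by linarith [neg_abs_le (f ω)])
  filter_upwards [hup, hlow, condExp_neg g m] with ω h_up h_low h_neg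
  rw [h_neg] at h_low
  exact abs_le.2 ⟨h_low, h_up⟩

lemma condExp_sub_condExp_mul {f g : Ω → ℝ} (hfg : Integrable (f * g) μ)
    (hcg : Integrable (μ[f|m] * g) μ) (hg : Integrable g μ) :
    μ[(f - μ[f|m]) * g|m] =ᵐ[μ] μ[f * g|m] - μ[f|m] * μ[g|m] := by
  rw [sub_mul]
  filter_upwards [condExp_sub hfg hcg m,
    condExp_mul_of_stronglyMeasurable_left stronglyMeasurable_condExp hcg hg] with ω h₁ h₂
  rw [h₁, Pi.sub_apply, Pi.sub_apply, h₂]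

lemma memLp_two_sub_condExp_of_risk_lt_top {W : Ω → ℝ} (hW : AEStronglyMeasurable W μ)
    (h : risk m μ W < ⊤) : MemLp (W - μ[W|m]) 2 μ := by
  have hA : AEStronglyMeasurable (W - μ[W|m]) μ := hW.sub integrable_condExp.1
  refine (memLp_two_iff_integrable_sq hA).2 ⟨hA.pow 2, ?_⟩
  exact (hasFiniteIntegral_iff_ofReal (ae_of_all _ fun ω => sq_nonneg _)).2 h

lemma integrable_sq_mul_of_abs_le {a x : Ω → ℝ} (ha : AEStronglyMeasurable a μ)
    (ha3 : Integrable (fun ω => a ω ^ 3) μ) (hx : AEStronglyMeasurable x μ)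
    (hxa : ∀ ω, |x ω| ≤ a ω) : Integrable ((fun ω => a ω ^ 2) * x) μ := by
  refine ha3.mono' ((ha.pow 2).mul hx) (ae_of_all _ fun ω => ?_)
  rw [Pi.mul_apply, norm_mul, Real.norm_of_nonneg (sq_nonneg _), Real.norm_eq_abs, pow_succ]
  exact mul_le_mul_of_nonneg_left (hxa ω) (sq_nonneg _)

variable [IsFiniteMeasure μ]

lemma integrable_pow_of_integrable_cube {a : Ω → ℝ} (ha : AEStronglyMeasurable a μ)
    (ha0 : ∀ ω, 0 ≤ a ω) (ha3 : Integrable (fun ω => a ω ^ 3) μ) {k : ℕ} (hk : k ≤ 3) :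
    Integrable (fun ω => a ω ^ k) μ :=
  (ha3.add (integrable_const 1)).mono' (ha.pow k) <| ae_of_all _ fun ω => by
    rw [Real.norm_of_nonneg (pow_nonneg (ha0 ω) k)]
    exact pow_le_pow_three_add_one (ha0 ω) hk

lemma integral_mul_eq_integral_mul_condExp (hm : m ≤ m0) {g f : Ω → ℝ}
    (hg : StronglyMeasurable[m] g) {c : ℝ} (hgc : ∀ ω, |g ω| ≤ c) (hf : Integrable f μ) :
    ∫ ω, g ω * f ω ∂μ = ∫ ω, g ω * μ[f|m] ω ∂μ := by
  have : IsFiniteMeasure (μ.trim hm) := isFiniteMeasure_trim hm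
  calc ∫ ω, g ω * f ω ∂μ = ∫ ω, μ[g * f|m] ω ∂μ := (integral_condExp hm).symm
    _ = ∫ ω, g ω * μ[f|m] ω ∂μ :=
      integral_congr_ae (condExp_stronglyMeasurable_mul_of_bound hm hg hf c (ae_of_all _ hgc))

end CondExp

section CondMoments

variable {Ω : Type*} {m m0 : MeasurableSpace Ω} {μ : Measure Ω} [IsFiniteMeasure μ] {a : Ω → ℝ}

lemma condExp_pow_mul_le (hm : m ≤ m0) (ha : AEStronglyMeasurable a μ) (ha0 : ∀ ω, 0 ≤ a ω)
    (ha3 : Integrable (fun ω => a ω ^ 3) μ) {r : Ω → ℝ} (hr : StronglyMeasurable[m] r)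
    (hr0 : ∀ ω, 0 ≤ r ω) (hr1 : ∀ ω, r ω ≤ 1) {k : ℕ} (hk : k ≤ 3) :
    ∀ᵐ ω ∂μ, r ω ^ k * μ[fun ω => a ω ^ k|m] ω ≤ r ω ^ 3 * μ[fun ω => a ω ^ 3|m] ω + 1 := by
  have hr_pow (j : ℕ) : StronglyMeasurable[m] (fun ω => r ω ^ j) := hr.pow j
  have hr_pow_le (j : ℕ) : ∀ᵐ ω ∂μ, ‖r ω ^ j‖ ≤ 1 := ae_of_all _ fun ω => by
    rw [Real.norm_of_nonneg (pow_nonneg (hr0 ω) j)]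
    exact pow_le_one₀ (hr0 ω) (hr1 ω)
  have hak := integrable_pow_of_integrable_cube ha ha0 ha3 hk
  have hint (j : ℕ) (h : Integrable (fun ω => a ω ^ j) μ) :
      Integrable ((fun ω => r ω ^ j) * fun ω => a ω ^ j) μ :=
    h.bdd_mul ((hr_pow j).mono hm).aestronglyMeasurable (hr_pow_le j)
  have hmono : μ[(fun ω => r ω ^ k) * (fun ω => a ω ^ k)|m] ≤ᵐ[μ]
      μ[(fun ω => r ω ^ 3) * (fun ω => a ω ^ 3) + fun _ => 1|m] :=
    condExp_mono (hint k hak) ((hint 3 ha3).add (integrable_const 1)) <| ae_of_all _ fun ω => by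
      simp only [Pi.mul_apply, Pi.add_apply, ← mul_pow]
      exact pow_le_pow_three_add_one (mul_nonneg (hr0 ω) (ha0 ω)) hk
  filter_upwards [hmono,
    condExp_stronglyMeasurable_mul_of_bound hm (hr_pow k) hak 1 (hr_pow_le k),
    condExp_stronglyMeasurable_mul_of_bound hm (hr_pow 3) ha3 1 (hr_pow_le 3),
    condExp_add (hint 3 ha3) (integrable_const (1 : ℝ)) m] with ω h h_k h_3 h_add
  rwa [h_k, h_add, Pi.add_apply, h_3, condExp_const hm] at h

lemma condExp_sq_mul_condExp_le (hm : m ≤ m0) (ha : AEStronglyMeasurable a μ)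
    (ha0 : ∀ ω, 0 ≤ a ω) (ha3 : Integrable (fun ω => a ω ^ 3) μ) :
    ∀ᵐ ω ∂μ, μ[fun ω => a ω ^ 2|m] ω * μ[a|m] ω ≤ 4 * (1 + μ[fun ω => a ω ^ 3|m] ω) := by
  set c := μ[fun ω => a ω ^ 3|m]
  have hbase (ω : Ω) : 1 ≤ 1 + max (c ω) 0 := le_add_of_nonneg_right (le_max_right _ _)
  -- conditioning on `m`, the rescaled variable `r * a` has third moment at most `1`
  set r : Ω → ℝ := fun ω => (1 + max (c ω) 0) ^ (-3⁻¹ : ℝ)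
  have hr : StronglyMeasurable[m] r := by
    have hc : Measurable[m] c := stronglyMeasurable_condExp.measurable
    exact Measurable.stronglyMeasurable (by fun_prop)
  have hr0 (ω : Ω) : 0 ≤ r ω := Real.rpow_nonneg (zero_le_one.trans (hbase ω)) _
  have hr1 (ω : Ω) : r ω ≤ 1 := Real.rpow_le_one_of_one_le_of_nonpos (hbase ω) (by norm_num)
  have hr3 (ω : Ω) : r ω ^ 3 * (1 + max (c ω) 0) = 1 := by
    rw [← Real.rpow_natCast, ← Real.rpow_mul (zero_le_one.trans (hbase ω))]
    norm_num [Real.rpow_neg_one]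
    exact inv_mul_cancel₀ (by linarith [hbase ω])
  have hr3c (ω : Ω) : r ω ^ 3 * c ω ≤ 1 := by
    rw [← hr3 ω]
    exact mul_le_mul_of_nonneg_left (by linarith [le_max_left (c ω) 0]) (pow_nonneg (hr0 ω) 3)
  have h1 := condExp_pow_mul_le hm ha ha0 ha3 hr hr0 hr1 (k := 1) (by norm_num)
  simp only [pow_one] at h1
  filter_upwards [condExp_pow_mul_le hm ha ha0 ha3 hr hr0 hr1 (k := 2) (by norm_num), h1,
    condExp_nonneg (m := m) (ae_of_all μ fun ω => sq_nonneg (a ω)),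
    condExp_nonneg (m := m) (ae_of_all μ ha0),
    condExp_nonneg (m := m) (ae_of_all μ fun ω => pow_nonneg (ha0 ω) 3)]
    with ω h_sq h_one h_sq0 h_one0 hc0
  simp only [Pi.zero_apply] at h_sq0 h_one0 hc0
  have hprod : (r ω ^ 2 * μ[fun ω => a ω ^ 2|m] ω) * (r ω * μ[a|m] ω) ≤ 2 * 2 :=
    mul_le_mul (by linarith [hr3c ω]) (by linarith [hr3c ω])
      (mul_nonneg (hr0 ω) h_one0) zero_le_two
  calc μ[fun ω => a ω ^ 2|m] ω * μ[a|m] ω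
      = (r ω ^ 2 * μ[fun ω => a ω ^ 2|m] ω) * (r ω * μ[a|m] ω) * (1 + max (c ω) 0) := by
        linear_combination (-(μ[fun ω => a ω ^ 2|m] ω * μ[a|m] ω)) * hr3 ω
    _ ≤ 2 * 2 * (1 + max (c ω) 0) :=
        mul_le_mul_of_nonneg_right hprod (zero_le_one.trans (hbase ω))
    _ = 4 * (1 + c ω) := by rw [max_eq_left hc0]; ring

lemma memLp_two_condExp_sq (hm : m ≤ m0) (ha : AEStronglyMeasurable a μ) (ha0 : ∀ ω, 0 ≤ a ω)
    (ha3 : Integrable (fun ω => a ω ^ 3) μ) (hmom : MemLp μ[fun ω => a ω ^ 3|m] 2 μ) :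
    MemLp μ[fun ω => a ω ^ 2|m] 2 μ := by
  refine (hmom.add (memLp_const 1)).of_le integrable_condExp.1 ?_
  filter_upwards [condExp_pow_mul_le hm ha ha0 ha3 stronglyMeasurable_const
      (fun _ => zero_le_one) (fun _ => le_rfl) (k := 2) (by norm_num),
    condExp_nonneg (m := m) (ae_of_all μ fun ω => sq_nonneg (a ω))] with ω h h0
  simp only [one_pow, one_mul, Pi.zero_apply] at h h0
  rw [Real.norm_of_nonneg h0]
  exact h.trans (le_abs_self _)

lemma integrable_of_abs_le_of_integrable_cube {x : Ω → ℝ} (ha : AEStronglyMeasurable a μ)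
    (ha0 : ∀ ω, 0 ≤ a ω) (ha3 : Integrable (fun ω => a ω ^ 3) μ) (hx : AEStronglyMeasurable x μ)
    (hxa : ∀ ω, |x ω| ≤ a ω) : Integrable x μ := by
  refine (integrable_pow_of_integrable_cube ha ha0 ha3 (k := 1) (by norm_num)).mono' hx ?_
  simpa using ae_of_all μ hxa

lemma memLp_two_of_abs_le_of_integrable_cube {x : Ω → ℝ} (ha : AEStronglyMeasurable a μ)
    (ha0 : ∀ ω, 0 ≤ a ω) (ha3 : Integrable (fun ω => a ω ^ 3) μ) (hx : AEStronglyMeasurable x μ)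
    (hxa : ∀ ω, |x ω| ≤ a ω) : MemLp x 2 μ := by
  have ha2 : MemLp a 2 μ := (memLp_two_iff_integrable_sq ha).2
    (integrable_pow_of_integrable_cube ha ha0 ha3 (by norm_num))
  exact ha2.of_le hx (ae_of_all _ fun ω => by simpa [abs_of_nonneg (ha0 ω)] using hxa ω)

lemma integrable_condExp_sq_mul (hm : m ≤ m0) {x : Ω → ℝ} (ha : AEStronglyMeasurable a μ)
    (ha0 : ∀ ω, 0 ≤ a ω) (ha3 : Integrable (fun ω => a ω ^ 3) μ)
    (hmom : MemLp μ[fun ω => a ω ^ 3|m] 2 μ) (hx : AEStronglyMeasurable x μ)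
    (hxa : ∀ ω, |x ω| ≤ a ω) : Integrable (μ[fun ω => a ω ^ 2|m] * x) μ :=
  (memLp_two_condExp_sq hm ha ha0 ha3 hmom).integrable_mul
    (memLp_two_of_abs_le_of_integrable_cube ha ha0 ha3 hx hxa)

lemma integrable_centered_sq_mul (hm : m ≤ m0) {x : Ω → ℝ} (ha : AEStronglyMeasurable a μ)
    (ha0 : ∀ ω, 0 ≤ a ω) (ha3 : Integrable (fun ω => a ω ^ 3) μ)
    (hmom : MemLp μ[fun ω => a ω ^ 3|m] 2 μ) (hx : AEStronglyMeasurable x μ)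
    (hxa : ∀ ω, |x ω| ≤ a ω) :
    Integrable (((fun ω => a ω ^ 2) - μ[fun ω => a ω ^ 2|m]) * x) μ := by
  rw [sub_mul]
  exact (integrable_sq_mul_of_abs_le ha ha3 hx hxa).sub
    (integrable_condExp_sq_mul hm ha ha0 ha3 hmom hx hxa)

lemma abs_condExp_centered_sq_mul_le (hm : m ≤ m0) {x : Ω → ℝ} (ha : AEStronglyMeasurable a μ)
    (ha0 : ∀ ω, 0 ≤ a ω) (ha3 : Integrable (fun ω => a ω ^ 3) μ)
    (hmom : MemLp μ[fun ω => a ω ^ 3|m] 2 μ) (hx : AEStronglyMeasurable x μ)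
    (hxa : ∀ ω, |x ω| ≤ a ω) :
    ∀ᵐ ω ∂μ, |μ[((fun ω => a ω ^ 2) - μ[fun ω => a ω ^ 2|m]) * x|m] ω| ≤
      4 + 5 * μ[fun ω => a ω ^ 3|m] ω := by
  have hx1 := integrable_of_abs_le_of_integrable_cube ha ha0 ha3 hx hxa
  have hmixed : ∀ᵐ ω ∂μ, |μ[(fun ω => a ω ^ 2) * x|m] ω| ≤ μ[fun ω => a ω ^ 3|m] ω := by
    refine abs_condExp_le_condExp (integrable_sq_mul_of_abs_le ha ha3 hx hxa) ha3
      (ae_of_all _ fun ω => ?_)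
    rw [Pi.mul_apply, abs_mul, abs_of_nonneg (sq_nonneg _), pow_succ]
    exact mul_le_mul_of_nonneg_left (hxa ω) (sq_nonneg _)
  filter_upwards [condExp_sub_condExp_mul (integrable_sq_mul_of_abs_le ha ha3 hx hxa)
      (integrable_condExp_sq_mul hm ha ha0 ha3 hmom hx hxa) hx1,
    hmixed, abs_condExp_le_condExp hx1 (integrable_of_abs_le_of_integrable_cube ha ha0 ha3 ha
      (fun ω => (abs_of_nonneg (ha0 ω)).le)) (ae_of_all _ hxa),
    condExp_sq_mul_condExp_le hm ha ha0 ha3,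
    condExp_nonneg (m := m) (ae_of_all μ fun ω => sq_nonneg (a ω))]
    with ω h_eq h_mixed h_x h_prod h0
  simp only [Pi.zero_apply] at h0
  rw [h_eq, Pi.sub_apply, Pi.mul_apply]
  calc |μ[(fun ω => a ω ^ 2) * x|m] ω - μ[fun ω => a ω ^ 2|m] ω * μ[x|m] ω|
      ≤ |μ[(fun ω => a ω ^ 2) * x|m] ω| + μ[fun ω => a ω ^ 2|m] ω * |μ[x|m] ω| := by
        rw [← abs_of_nonneg h0, ← abs_mul, abs_of_nonneg h0]; exact abs_sub _ _
    _ ≤ μ[fun ω => a ω ^ 3|m] ω + 4 * (1 + μ[fun ω => a ω ^ 3|m] ω) :=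
        add_le_add h_mixed ((mul_le_mul_of_nonneg_left h_x h0).trans h_prod)
    _ = 4 + 5 * μ[fun ω => a ω ^ 3|m] ω := by ring

end CondMoments

lemma lintegral_ofReal_sq_lt_top_of_setIntegral_mul_le {Ω : Type*} [MeasurableSpace Ω]
    {μ : Measure Ω} {A B T : Ω → ℝ} {s : ℕ → Set Ω} (hs_mono : Monotone s)
    (hs_cover : ⋃ n, s n = Set.univ) (hA : MemLp A 2 μ) (hB : ∀ᵐ ω ∂μ, B ω = A ω + 2 * T ω)
    (hT : ∀ n, MemLp T 2 (μ.restrict (s n))) {K : ℝ}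
    (hK : ∀ n, ∫ ω in s n, B ω * T ω ∂μ ≤ K) :
    ∫⁻ ω, ENNReal.ofReal (B ω ^ 2) ∂μ < ⊤ := by
  have hbound (n : ℕ) : ∫⁻ ω in s n, ENNReal.ofReal (B ω ^ 2) ∂μ ≤
      ENNReal.ofReal (∫ ω, A ω ^ 2 ∂μ + 4 * K) := by
    have hA' := hA.restrict (s n)
    have hB' : MemLp B 2 (μ.restrict (s n)) :=
      (hA'.add ((hT n).const_mul 2)).ae_eq (ae_restrict_of_ae (hB.mono fun ω h => h.symm))
    -- `B² = A² + 4 B T - 4 T²` because `B = A + 2 T`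
    have hpt : ∀ᵐ ω ∂μ.restrict (s n), B ω ^ 2 ≤ A ω ^ 2 + 4 * (B ω * T ω) :=
      (ae_restrict_of_ae hB).mono fun ω h => by rw [h]; nlinarith [sq_nonneg (T ω)]
    have hBT : Integrable (fun ω => B ω * T ω) (μ.restrict (s n)) := hB'.integrable_mul (hT n)
    have hint : ∫ ω in s n, B ω ^ 2 ∂μ ≤
        ∫ ω in s n, A ω ^ 2 ∂μ + 4 * ∫ ω in s n, B ω * T ω ∂μ := by
      rw [← integral_const_mul, ← integral_add hA'.integrable_sq (hBT.const_mul 4)]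
      exact integral_mono_ae hB'.integrable_sq (hA'.integrable_sq.add (hBT.const_mul 4)) hpt
    rw [← ofReal_integral_eq_lintegral_ofReal hB'.integrable_sq
      (ae_of_all _ fun ω => sq_nonneg _)]
    refine ENNReal.ofReal_le_ofReal ?_
    linarith [setIntegral_le_integral (s := s n) hA.integrable_sq
      (ae_of_all _ fun ω => sq_nonneg (A ω)), hK n]
  calc ∫⁻ ω, ENNReal.ofReal (B ω ^ 2) ∂μ = ⨆ n, ∫⁻ ω in s n, ENNReal.ofReal (B ω ^ 2) ∂μ := by
        rw [← setLIntegral_iUnion_of_directed _ hs_mono.directed_le, hs_cover,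
          Measure.restrict_univ]
    _ ≤ ENNReal.ofReal (∫ ω, A ω ^ 2 ∂μ + 4 * K) := iSup_le hbound
    _ < ⊤ := ENNReal.ofReal_lt_top

section CrossTerm

variable {Ω : Type*} {m m0 : MeasurableSpace Ω} {μ : Measure Ω} [IsFiniteMeasure μ]
  {ι : Type*} [Fintype ι]

lemma setIntegral_mul_sub_condExp_le (hm : m ≤ m0) {B ψ : Ω → ℝ} {x y : ι → Ω → ℝ} {s : Set Ω}
    {c : ℝ} (hs : MeasurableSet[m] s) (hy : ∀ i, StronglyMeasurable[m] (y i))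
    (hys : ∀ i, ∀ ω ∈ s, |y i ω| ≤ c) (hTs : ∀ ω ∈ s, |μ[∑ i, y i * x i|m] ω| ≤ c)
    (hB : Integrable B μ) (hB0 : μ[B|m] =ᵐ[μ] 0) (hBx : ∀ i, Integrable (B * x i) μ)
    (hcov : ∀ i, ∀ᵐ ω ∂μ, |μ[B * x i|m] ω| ≤ ψ ω)
    (hyψ : ∀ i, Integrable (fun ω => |y i ω| * ψ ω) μ) :
    ∫ ω in s, B ω * ((∑ i, y i * x i) ω - μ[∑ i, y i * x i|m] ω) ∂μ ≤
      ∑ i, ∫ ω, |y i ω| * ψ ω ∂μ := by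
  set cT := μ[∑ i, y i * x i|m]
  have hcut {g : Ω → ℝ} (hg : StronglyMeasurable[m] g) (hgs : ∀ ω ∈ s, |g ω| ≤ c) :
      StronglyMeasurable[m] (s.indicator g) ∧ ∀ ω, |s.indicator g ω| ≤ |c| := by
    refine ⟨hg.indicator hs, fun ω => ?_⟩
    by_cases h : ω ∈ s
    · simpa [h] using (hgs ω h).trans (le_abs_self c)
    · simp [h]
  have hcut_y (i : ι) := hcut (hy i) (hys i)
  have hcut_T := hcut stronglyMeasurable_condExp hTs
  have hsplit : s.indicator (fun ω => B ω * ((∑ i, y i * x i) ω - cT ω)) =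
      fun ω => ∑ i, s.indicator (y i) ω * (B ω * x i ω) - s.indicator cT ω * B ω := by
    ext ω
    by_cases h : ω ∈ s
    · simp only [Set.indicator_of_mem h, Finset.sum_apply, Pi.mul_apply]
      rw [mul_sub, Finset.mul_sum, mul_comm (B ω) (cT ω)]
      exact congrArg (· - _) (Finset.sum_congr rfl fun i _ => by ring)
    · simp [h]
  have hterm (i : ι) : ∫ ω, s.indicator (y i) ω * (B ω * x i ω) ∂μ ≤ ∫ ω, |y i ω| * ψ ω ∂μ := by
    refine (integral_mul_eq_integral_mul_condExp hm (hcut_y i).1 (hcut_y i).2 (hBx i)).trans_le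
      (integral_mono_ae (integrable_condExp.bdd_mul ((hcut_y i).1.mono hm).aestronglyMeasurable
      (ae_of_all _ (hcut_y i).2)) (hyψ i) ?_)
    filter_upwards [hcov i] with ω h
    calc s.indicator (y i) ω * μ[B * x i|m] ω ≤ |s.indicator (y i) ω| * |μ[B * x i|m] ω| := by
          rw [← abs_mul]; exact le_abs_self _
      _ ≤ |y i ω| * ψ ω := mul_le_mul (norm_indicator_le_norm_self (y i) ω) h (abs_nonneg _)
          (abs_nonneg _)
  have hcentered : ∫ ω, s.indicator cT ω * B ω ∂μ = 0 := by
    rw [integral_mul_eq_integral_mul_condExp hm hcut_T.1 hcut_T.2 hB,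
      integral_congr_ae (hB0.mono fun ω h => by rw [h, Pi.zero_apply, mul_zero]), integral_zero]
  have hint_y (i : ι) : Integrable (fun ω => s.indicator (y i) ω * (B ω * x i ω)) μ :=
    (hBx i).bdd_mul ((hcut_y i).1.mono hm).aestronglyMeasurable (ae_of_all _ (hcut_y i).2)
  rw [← integral_indicator (hm _ hs), hsplit,
    integral_sub (integrable_finsetSum _ fun i _ => hint_y i)
      (hB.bdd_mul (hcut_T.1.mono hm).aestronglyMeasurable (ae_of_all _ hcut_T.2)),
    integral_finsetSum _ fun i _ => hint_y i, hcentered, sub_zero]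
  exact Finset.sum_le_sum fun i _ => hterm i

theorem risk_lt_top_of_eq_add_inner (hm : m ≤ m0) {Z W Q ψ : Ω → ℝ} {x y : ι → Ω → ℝ}
    (hZ : Integrable Z μ) (hQ : StronglyMeasurable[m] Q) (hQi : Integrable Q μ)
    (hy : ∀ i, StronglyMeasurable[m] (y i)) (hy2 : ∀ i, MemLp (y i) 2 μ)
    (hx2 : ∀ i, MemLp (x i) 2 μ) (hZW : Z = W + (2 : ℝ) • ∑ i, y i * x i - Q)
    (hBx : ∀ i, Integrable ((Z - μ[Z|m]) * x i) μ) (hψ : MemLp ψ 2 μ)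
    (hcov : ∀ i, ∀ᵐ ω ∂μ, |μ[(Z - μ[Z|m]) * x i|m] ω| ≤ ψ ω) (hW : risk m μ W < ⊤) :
    risk m μ Z < ⊤ := by
  have : IsFiniteMeasure (μ.trim hm) := isFiniteMeasure_trim hm
  set T := ∑ i, y i * x i
  have hT : Integrable T μ := integrable_finsetSum' _ fun i _ => (hy2 i).integrable_mul (hx2 i)
  have hWi : Integrable W μ := by
    have hW_eq : W = Z - (2 : ℝ) • T + Q := by rw [hZW]; abel
    exact hW_eq ▸ (hZ.sub (hT.smul 2)).add hQi
  have hcZ : μ[Z|m] =ᵐ[μ] μ[W|m] + (2 : ℝ) • μ[T|m] - Q := by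
    rw [hZW]
    filter_upwards [condExp_sub (hWi.add (hT.smul (2 : ℝ))) hQi m,
      condExp_add hWi (hT.smul (2 : ℝ)) m, condExp_smul (2 : ℝ) T m] with ω h_sub h_add h_smul
    rw [h_sub, Pi.sub_apply, h_add, Pi.add_apply, h_smul, condExp_of_stronglyMeasurable hm hQ hQi]
    rfl
  have hdecomp : ∀ᵐ ω ∂μ, (Z - μ[Z|m]) ω = (W - μ[W|m]) ω + 2 * (T - μ[T|m]) ω := by
    filter_upwards [hcZ] with ω h
    rw [Pi.sub_apply, h, congrFun hZW ω]
    simp only [Pi.sub_apply, Pi.add_apply, Pi.smul_apply, smul_eq_mul]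
    ring
  have hB0 : μ[Z - μ[Z|m]|m] =ᵐ[μ] 0 := by
    filter_upwards [condExp_sub hZ integrable_condExp m] with ω h
    rw [h, Pi.sub_apply, condExp_of_stronglyMeasurable hm stronglyMeasurable_condExp
      integrable_condExp, sub_self, Pi.zero_apply]
  set F : Ω → ℝ := fun ω => ∑ i, |y i ω| + |μ[T|m] ω|
  set s : ℕ → Set Ω := fun n => {ω | F ω ≤ n}
  have hs (n : ℕ) : MeasurableSet[m] (s n) := by
    have hF : Measurable[m] F := by
      have hy' (i : ι) : Measurable[m] (y i) := (hy i).measurable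
      have hcT : Measurable[m] μ[T|m] := stronglyMeasurable_condExp.measurable
      fun_prop
    exact measurableSet_le hF measurable_const
  have hys (n : ℕ) (i : ι) : ∀ ω ∈ s n, |y i ω| ≤ n := fun ω hω =>
    ((Finset.single_le_sum (fun j _ => abs_nonneg (y j ω)) (Finset.mem_univ i)).trans
      (le_add_of_nonneg_right (abs_nonneg _))).trans hω
  have hTs (n : ℕ) : ∀ ω ∈ s n, |μ[T|m] ω| ≤ n := fun ω hω =>
    (le_add_of_nonneg_left (Finset.sum_nonneg fun j _ => abs_nonneg (y j ω))).trans hω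
  have hT_trunc (n : ℕ) : MemLp (T - μ[T|m]) 2 (μ.restrict (s n)) := by
    have hs' : MeasurableSet (s n) := hm _ (hs n)
    refine MemLp.sub (memLp_finsetSum' _ fun i _ => ?_) ?_
    · have hy_top : MemLp (y i) ⊤ (μ.restrict (s n)) :=
        memLp_top_of_bound ((hy i).mono hm).aestronglyMeasurable.restrict n
          (ae_restrict_of_forall_mem hs' (hys n i))
      exact (hx2 i).restrict (s n) |>.mul hy_top
    · exact MemLp.of_bound (stronglyMeasurable_condExp.mono hm).aestronglyMeasurable.restrict n
        (ae_restrict_of_forall_mem hs' (hTs n))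
  exact lintegral_ofReal_sq_lt_top_of_setIntegral_mul_le (s := s)
    (fun n n' h ω (hω : F ω ≤ n) => show F ω ≤ n' from hω.trans (Nat.cast_le.2 h))
    (Set.eq_univ_of_forall fun ω => Set.mem_iUnion.2 (exists_nat_ge (F ω)))
    (memLp_two_sub_condExp_of_risk_lt_top hWi.1 hW) hdecomp hT_trunc fun n =>
      setIntegral_mul_sub_condExp_le hm (hs n) hy (hys n) (hTs n) (hZ.sub integrable_condExp)
        hB0 hBx hcov fun i => (hy2 i).abs.integrable_mul hψ

end CrossTerm

theorem stmt19_general {Ω : Type*} (m : MeasurableSpace Ω) [m0 : MeasurableSpace Ω] (hm : m ≤ m0)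
    (μ : Measure Ω) [IsProbabilityMeasure μ] {M : ℕ}
    (X Xdag : Ω → Fin M → ℝ)
    (hXmeas : ∀ i, AEMeasurable (fun ω => X ω i) μ)
    (hX3 : Integrable (fun ω => enorm2 (X ω) ^ 3) μ)
    (hmom : MemLp (μ[(fun ω => enorm2 (X ω) ^ 3)|m]) 2 μ)
    (hXdagm : StronglyMeasurable[m] Xdag)
    (hXdag2 : ∀ i, MemLp (fun ω => Xdag ω i) 2 μ)
    (ε : ℝ)
    (hslater : risk m μ (fun ω => sqn (fun i => X ω i - Xdag ω i)) < ENNReal.ofReal ε) :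
    risk m μ (fun ω => sqn (X ω)) < ⊤ := by
  have ha : AEStronglyMeasurable (fun ω => enorm2 (X ω)) μ :=
    (continuous_enorm2.measurable.comp_aemeasurable
      (aemeasurable_pi_iff.2 hXmeas)).aestronglyMeasurable
  have ha0 (ω : Ω) : 0 ≤ enorm2 (X ω) := enorm2_nonneg _
  have hx (i : Fin M) : AEStronglyMeasurable (fun ω => X ω i) μ := (hXmeas i).aestronglyMeasurable
  have hxa (i : Fin M) (ω : Ω) : |X ω i| ≤ enorm2 (X ω) := abs_le_enorm2 _ _
  simp only [← enorm2_sq]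
  refine risk_lt_top_of_eq_add_inner hm (x := fun i ω => X ω i) (y := fun i ω => Xdag ω i)
    (integrable_pow_of_integrable_cube ha ha0 hX3 (by norm_num))
    (continuous_sqn.comp_stronglyMeasurable hXdagm)
    (integrable_finsetSum _ fun i _ => (hXdag2 i).integrable_sq)
    (fun i => (continuous_apply i).comp_stronglyMeasurable hXdagm) hXdag2
    (fun i => memLp_two_of_abs_le_of_integrable_cube ha ha0 hX3 (hx i) (hxa i)) ?_
    (fun i => integrable_centered_sq_mul hm ha ha0 hX3 hmom (hx i) (hxa i))
    ((memLp_const (4 : ℝ)).add (hmom.const_mul 5))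
    (fun i => abs_condExp_centered_sq_mul_le hm ha ha0 hX3 hmom (hx i) (hxa i))
    (hslater.trans ENNReal.ofReal_lt_top)
  funext ω
  simp only [Pi.add_apply, Pi.sub_apply, Pi.smul_apply, Finset.sum_apply, Pi.mul_apply,
    smul_eq_mul]
  rw [enorm2_sq]
  exact sqn_eq_sqn_sub_add (X ω) (Xdag ω)

/-- Under Slater's condition for the risk constraint — existence of a
feasible `σ(Y)`-measurable square-integrable `X̂†` with `E[V_Y[‖X − X̂†‖₂²]] < ε` — it
necessarily holds that `E[V_Y[‖X‖₂²]] < ∞` (under the moment assumption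
`E[(E[‖X‖₂³|Y])²] < ∞`; `m` plays the role of `σ(Y)`). -/
theorem stmt19 {Ω : Type*} (m : MeasurableSpace Ω) [m0 : MeasurableSpace Ω] (hm : m ≤ m0)
    (μ : Measure Ω) [IsProbabilityMeasure μ] {M : ℕ}
    (X Xdag : Ω → Fin M → ℝ)
    (hXmeas : ∀ i, AEMeasurable (fun ω => X ω i) μ)
    (hX3 : Integrable (fun ω => enorm2 (X ω) ^ 3) μ)
    (hmom : MemLp (μ[(fun ω => enorm2 (X ω) ^ 3)|m]) 2 μ)
    (hXdagm : StronglyMeasurable[m] Xdag)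
    (hXdag2 : ∀ i, MemLp (fun ω => Xdag ω i) 2 μ)
    (ε : ℝ) (hε : 0 < ε)
    (hslater : risk m μ (fun ω => sqn (fun i => X ω i - Xdag ω i)) < ENNReal.ofReal ε) :
    risk m μ (fun ω => sqn (X ω)) < ⊤ :=
  stmt19_general m (m0 := m0) hm μ X Xdag hXmeas hX3 hmom hXdagm hXdag2 ε hslater
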